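/- arXiv:0810.1235 — 2 statements merged into one kernel-verified Lean document; each statement's English description precedes it below -/
import Mathlib

section
/- Let l : D → S³ ⊂ ℝ⁴ be a minimal surface in principal parameters (F = f = 0, ν₁ + ν₂ = 0) with ν := ν₁ > 0 and ν_u·ν_v ≠ 0 on D (strong regularity). Then the product ν·E does not depend on v and the product ν·G does not depend on u; that is, ∂(νE)/∂v = 0 and ∂(νG)/∂u = 0 on D. -/
open Real Set
open scoped RealInnerProductSpace

noncomputable section

/-- Partial derivative in the first (`u`) direction. -/
def pu {α : Type*} [NormedAddCommGroup α] [NormedSpace ℝ α]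
    (f : ℝ × ℝ → α) (p : ℝ × ℝ) : α :=
  fderiv ℝ f p (1, 0)

/-- Partial derivative in the second (`v`) direction. -/
def pv {α : Type*} [NormedAddCommGroup α] [NormedSpace ℝ α]
    (f : ℝ × ℝ → α) (p : ℝ × ℝ) : α :=
  fderiv ℝ f p (0, 1)

/-- `ℝ⁴` with its Euclidean inner product. -/
abbrev R4 := EuclideanSpace ℝ (Fin 4)

/-- First fundamental form coefficient `E = l_u · l_u`. -/
def iE (l : ℝ × ℝ → R4) (p : ℝ × ℝ) : ℝ := ⟪pu l p, pu l p⟫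

/-- First fundamental form coefficient `F = l_u · l_v`. -/
def iF (l : ℝ × ℝ → R4) (p : ℝ × ℝ) : ℝ := ⟪pu l p, pv l p⟫

/-- First fundamental form coefficient `G = l_v · l_v`. -/
def iG (l : ℝ × ℝ → R4) (p : ℝ × ℝ) : ℝ := ⟪pv l p, pv l p⟫

/-- Second fundamental form coefficient `e = l_uu · N`. -/
def iie (l N : ℝ × ℝ → R4) (p : ℝ × ℝ) : ℝ := ⟪pu (pu l) p, N p⟫

/-- Second fundamental form coefficient `f = l_uv · N`. -/
def iif (l N : ℝ × ℝ → R4) (p : ℝ × ℝ) : ℝ := ⟪pv (pu l) p, N p⟫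

/-- Second fundamental form coefficient `g = l_vv · N`. -/
def iig (l N : ℝ × ℝ → R4) (p : ℝ × ℝ) : ℝ := ⟪pv (pv l) p, N p⟫

/-- Principal curvature `ν₁ = e / E` (in principal parameters). -/
def nu1 (l N : ℝ × ℝ → R4) (p : ℝ × ℝ) : ℝ := iie l N p / iE l p

/-- Principal curvature `ν₂ = g / G` (in principal parameters). -/
def nu2 (l N : ℝ × ℝ → R4) (p : ℝ × ℝ) : ℝ := iig l N p / iG l p

/-- Principal geodesic curvature `γ₁ = -E_v / (2E√G)`. -/
def gam1 (l : ℝ × ℝ → R4) (p : ℝ × ℝ) : ℝ :=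
  -(pv (iE l) p) / (2 * iE l p * Real.sqrt (iG l p))

/-- Principal geodesic curvature `γ₂ = G_u / (2G√E)`. -/
def gam2 (l : ℝ × ℝ → R4) (p : ℝ × ℝ) : ℝ :=
  pu (iG l) p / (2 * iG l p * Real.sqrt (iE l p))

/-- Unit tangent vector `X = l_u / √E`. -/
def sX (l : ℝ × ℝ → R4) (p : ℝ × ℝ) : R4 := (Real.sqrt (iE l p))⁻¹ • pu l p

/-- Unit tangent vector `Y = l_v / √G`. -/
def sY (l : ℝ × ℝ → R4) (p : ℝ × ℝ) : R4 := (Real.sqrt (iG l p))⁻¹ • pv l p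

/-- The matrix whose rows are the four given vectors of `ℝ⁴`. -/
def toMat (a b c d : R4) : Matrix (Fin 4) (Fin 4) ℝ :=
  Matrix.of ![fun j => a j, fun j => b j, fun j => c j, fun j => d j]

/-- `N` is a unit normal field of the surface `l` in `S³` over `D`. -/
def IsUnitNormal (D : Set (ℝ × ℝ)) (l N : ℝ × ℝ → R4) : Prop :=
  ∀ p ∈ D, ‖N p‖ = 1 ∧ ⟪N p, l p⟫ = 0 ∧ ⟪N p, pu l p⟫ = 0 ∧ ⟪N p, pv l p⟫ = 0

section Aux
variable {α : Type*} [NormedAddCommGroup α] [NormedSpace ℝ α] {D : Set (ℝ × ℝ)}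

lemma contDiffOn_pu {f : ℝ × ℝ → α} (hD : IsOpen D) (hf : ContDiffOn ℝ (⊤ : ℕ∞) f D) :
    ContDiffOn ℝ (⊤ : ℕ∞) (pu f) D :=
  (hf.fderiv_of_isOpen hD (by simp)).clm_apply contDiffOn_const

lemma contDiffOn_pv {f : ℝ × ℝ → α} (hD : IsOpen D) (hf : ContDiffOn ℝ (⊤ : ℕ∞) f D) :
    ContDiffOn ℝ (⊤ : ℕ∞) (pv f) D :=
  (hf.fderiv_of_isOpen hD (by simp)).clm_apply contDiffOn_const

lemma diffAt {f : ℝ × ℝ → α} (hD : IsOpen D) (hf : ContDiffOn ℝ (⊤ : ℕ∞) f D)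
    {p : ℝ × ℝ} (hp : p ∈ D) : DifferentiableAt ℝ f p :=
  (hf.differentiableOn (by simp)).differentiableAt (hD.mem_nhds hp)

lemma pupv_swap {f : ℝ × ℝ → α} (hD : IsOpen D) (hf : ContDiffOn ℝ (⊤ : ℕ∞) f D)
    {p : ℝ × ℝ} (hp : p ∈ D) : pu (pv f) p = pv (pu f) p := by
  have hf' : ContDiffOn ℝ (⊤ : ℕ∞) (fderiv ℝ f) D := hf.fderiv_of_isOpen hD (by simp)
  have hd : DifferentiableAt ℝ (fderiv ℝ f) p := diffAt hD hf' hp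
  have hev : ∀ᶠ y in nhds p, HasFDerivAt f (fderiv ℝ f y) y := by
    filter_upwards [hD.mem_nhds hp] with y hy using (diffAt hD hf hy).hasFDerivAt
  have hsymm := second_derivative_symmetric_of_eventually hev hd.hasFDerivAt
      ((1:ℝ), (0:ℝ)) ((0:ℝ), (1:ℝ))
  have h1 : pu (pv f) p = fderiv ℝ (fderiv ℝ f) p (1, 0) (0, 1) := by
    show fderiv ℝ (fun q => fderiv ℝ f q (0, 1)) p (1, 0) = _
    rw [fderiv_clm_apply hd (differentiableAt_const _)]
    simp
  have h2 : pv (pu f) p = fderiv ℝ (fderiv ℝ f) p (0, 1) (1, 0) := by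
    show fderiv ℝ (fun q => fderiv ℝ f q (1, 0)) p (0, 1) = _
    rw [fderiv_clm_apply hd (differentiableAt_const _)]
    simp
  rw [h1, h2, hsymm]

lemma deriv_inner_const {f g : ℝ × ℝ → R4} {p : ℝ × ℝ} {c : ℝ} (z : ℝ × ℝ)
    (hf : DifferentiableAt ℝ f p) (hg : DifferentiableAt ℝ g p)
    (h : (fun q => ⟪f q, g q⟫) =ᶠ[nhds p] fun _ => c) :
    ⟪f p, fderiv ℝ g p z⟫ + ⟪fderiv ℝ f p z, g p⟫ = 0 := by
  have h1 := fderiv_inner_apply (𝕜 := ℝ) hf hg z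
  rw [h.fderiv_eq] at h1
  simpa using h1.symm

lemma frame_eq_zero {x y c d w : R4}
    (hx : 0 < ⟪x, x⟫) (hy : 0 < ⟪y, y⟫)
    (hcc : ⟪c, c⟫ = 1) (hdd : ⟪d, d⟫ = 1)
    (hxy : ⟪x, y⟫ = 0) (hxc : ⟪x, c⟫ = 0) (hxd : ⟪x, d⟫ = 0)
    (hyc : ⟪y, c⟫ = 0) (hyd : ⟪y, d⟫ = 0) (hcd : ⟪c, d⟫ = 0)
    (hwx : ⟪x, w⟫ = 0) (hwy : ⟪y, w⟫ = 0) (hwc : ⟪c, w⟫ = 0) (hwd : ⟪d, w⟫ = 0) :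
    w = 0 := by
  have hsx : (0:ℝ) < Real.sqrt ⟪x, x⟫ := Real.sqrt_pos.2 hx
  have hsy : (0:ℝ) < Real.sqrt ⟪y, y⟫ := Real.sqrt_pos.2 hy
  set tx := Real.sqrt ⟪x, x⟫ with htx
  set ty := Real.sqrt ⟪y, y⟫ with hty
  have hxx : tx * tx = ⟪x, x⟫ := Real.mul_self_sqrt hx.le
  have hyy : ty * ty = ⟪y, y⟫ := Real.mul_self_sqrt hy.le
  set a : R4 := tx⁻¹ • x with ha
  set b : R4 := ty⁻¹ • y with hb
  have haa : ⟪a, a⟫ = 1 := by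
    rw [ha, real_inner_smul_left, real_inner_smul_right, ← hxx,
      inv_mul_cancel_left₀ hsx.ne', inv_mul_cancel₀ hsx.ne']
  have hbb : ⟪b, b⟫ = 1 := by
    rw [hb, real_inner_smul_left, real_inner_smul_right, ← hyy,
      inv_mul_cancel_left₀ hsy.ne', inv_mul_cancel₀ hsy.ne']
  have hab : ⟪a, b⟫ = 0 := by rw [ha, hb, real_inner_smul_left, real_inner_smul_right, hxy]; ring
  have hac : ⟪a, c⟫ = 0 := by rw [ha, real_inner_smul_left, hxc]; ring
  have had : ⟪a, d⟫ = 0 := by rw [ha, real_inner_smul_left, hxd]; ring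
  have hbc : ⟪b, c⟫ = 0 := by rw [hb, real_inner_smul_left, hyc]; ring
  have hbd : ⟪b, d⟫ = 0 := by rw [hb, real_inner_smul_left, hyd]; ring
  have hwa : ⟪a, w⟫ = 0 := by rw [ha, real_inner_smul_left, hwx]; ring
  have hwb : ⟪b, w⟫ = 0 := by rw [hb, real_inner_smul_left, hwy]; ring
  have hon : Orthonormal ℝ ![a, b, c, d] := by
    rw [orthonormal_iff_ite]
    intro i j
    fin_cases i <;> fin_cases j <;>
      norm_num [haa, hbb, hcc, hdd, hab, hac, had, hbc, hbd, hcd,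
        real_inner_comm a b, real_inner_comm a c, real_inner_comm a d,
        real_inner_comm b c, real_inner_comm b d, real_inner_comm c d, Fin.ext_iff,
        (by rw [norm_eq_sqrt_real_inner, haa]; simp : ‖a‖ = 1),
        (by rw [norm_eq_sqrt_real_inner, hbb]; simp : ‖b‖ = 1),
        (by rw [norm_eq_sqrt_real_inner, hcc]; simp : ‖c‖ = 1),
        (by rw [norm_eq_sqrt_real_inner, hdd]; simp : ‖d‖ = 1)]
  have hsp : ⊤ ≤ Submodule.span ℝ (Set.range ![a, b, c, d]) := by
    rw [hon.linearIndependent.span_eq_top_of_card_eq_finrank (by simp)]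
  let B : OrthonormalBasis (Fin 4) ℝ R4 := OrthonormalBasis.mk hon hsp
  have hB : ⇑B = ![a, b, c, d] := OrthonormalBasis.coe_mk hon hsp
  have key : ∀ i : Fin 4, ⟪![a, b, c, d] i, w⟫ = 0 := by
    intro i
    fin_cases i
    · simpa using hwa
    · simpa using hwb
    · simpa using hwc
    · simpa using hwd
  have h0 : B.repr w = 0 := by
    ext i
    rw [B.repr_apply_apply, hB]
    simpa using key i
  have : B.repr w = B.repr 0 := by simp [h0]
  exact B.repr.injective this

end Aux


/-- For a minimal strongly regular surface in `S³` in principal parameters with normal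
curvature `ν = ν₁ > 0`, the product `ν E` does not depend on `v` and the product `ν G`
does not depend on `u`. -/
theorem nuE_nuG_independence
    (D : Set (ℝ × ℝ)) (hD : IsOpen D) (l N : ℝ × ℝ → R4)
    (hl : ContDiffOn ℝ (⊤ : ℕ∞) l D) (hN : ContDiffOn ℝ (⊤ : ℕ∞) N D)
    -- the image lies in `S³`
    (hsph : ∀ p ∈ D, ‖l p‖ = 1)
    -- `l` is an immersion
    (himm : ∀ p ∈ D, 0 < iE l p ∧ 0 < iG l p)
    -- `N` is a unit normal field
    (hnorm : IsUnitNormal D l N)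
    -- the parameters are principal: `F = f = 0`
    (hprin : ∀ p ∈ D, iF l p = 0 ∧ iif l N p = 0)
    -- the surface is minimal: `ν₁ + ν₂ = 0`
    (hmin : ∀ p ∈ D, nu1 l N p + nu2 l N p = 0)
    -- `ν = ν₁ > 0`
    (hpos : ∀ p ∈ D, 0 < nu1 l N p)
    -- strong regularity: `ν_u ν_v ≠ 0`
    (hreg : ∀ p ∈ D, pu (nu1 l N) p * pv (nu1 l N) p ≠ 0) :
    ∀ p ∈ D,
      pv (fun q => nu1 l N q * iE l q) p = 0 ∧
      pu (fun q => nu1 l N q * iG l q) p = 0 := by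
  intro p hp
  have npD : D ∈ nhds p := hD.mem_nhds hp
  have hlu : ContDiffOn ℝ (⊤ : ℕ∞) (pu l) D := contDiffOn_pu hD hl
  have hlv : ContDiffOn ℝ (⊤ : ℕ∞) (pv l) D := contDiffOn_pv hD hl
  have hluu : ContDiffOn ℝ (⊤ : ℕ∞) (pu (pu l)) D := contDiffOn_pu hD hlu
  have hluv : ContDiffOn ℝ (⊤ : ℕ∞) (pv (pu l)) D := contDiffOn_pv hD hlu
  have hlvv : ContDiffOn ℝ (⊤ : ℕ∞) (pv (pv l)) D := contDiffOn_pv hD hlv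
  have dl : DifferentiableAt ℝ l p := diffAt hD hl hp
  have dN : DifferentiableAt ℝ N p := diffAt hD hN hp
  have dlu : DifferentiableAt ℝ (pu l) p := diffAt hD hlu hp
  have dlv : DifferentiableAt ℝ (pv l) p := diffAt hD hlv hp
  have dluu : DifferentiableAt ℝ (pu (pu l)) p := diffAt hD hluu hp
  have dluv : DifferentiableAt ℝ (pv (pu l)) p := diffAt hD hluv hp
  have dlvv : DifferentiableAt ℝ (pv (pv l)) p := diffAt hD hlvv hp
  have hswapD : ∀ q ∈ D, pu (pv l) q = pv (pu l) q := fun q hq => pupv_swap hD hl hq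
  have hEpos : (0:ℝ) < ⟪pu l p, pu l p⟫ := (himm p hp).1
  have hGpos : (0:ℝ) < ⟪pv l p, pv l p⟫ := (himm p hp).2
  have hF : ⟪pu l p, pv l p⟫ = (0:ℝ) := (hprin p hp).1
  have hNN : ∀ q ∈ D, ⟪N q, N q⟫ = (1:ℝ) := fun q hq => by
    rw [real_inner_self_eq_norm_mul_norm, (hnorm q hq).1]; ring
  have hll : ∀ q ∈ D, ⟪l q, l q⟫ = (1:ℝ) := fun q hq => by
    rw [real_inner_self_eq_norm_mul_norm, hsph q hq]; ring
  have hNl : ∀ q ∈ D, ⟪N q, l q⟫ = (0:ℝ) := fun q hq => (hnorm q hq).2.1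
  have hNlu : ∀ q ∈ D, ⟪N q, pu l q⟫ = (0:ℝ) := fun q hq => (hnorm q hq).2.2.1
  have hNlv : ∀ q ∈ D, ⟪N q, pv l q⟫ = (0:ℝ) := fun q hq => (hnorm q hq).2.2.2
  have hf0 : ∀ q ∈ D, ⟪pv (pu l) q, N q⟫ = (0:ℝ) := fun q hq => (hprin q hq).2
  have hF0 : ∀ q ∈ D, ⟪pu l q, pv l q⟫ = (0:ℝ) := fun q hq => (hprin q hq).1
  set ep : ℝ := ⟪pu (pu l) p, N p⟫ with hep
  set gp : ℝ := ⟪pv (pv l) p, N p⟫ with hgp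
  set Ep : ℝ := ⟪pu l p, pu l p⟫ with hEp
  set Gp : ℝ := ⟪pv l p, pv l p⟫ with hGp
  set s : ℝ := ⟪pv (pu l) p, pu l p⟫ with hs
  set t : ℝ := ⟪pv (pu l) p, pv l p⟫ with ht
  -- first derivatives of the constant inner products
  have hlul : ⟪pu l p, l p⟫ = 0 := by
    have h : ⟪l p, pu l p⟫ + ⟪pu l p, l p⟫ = 0 :=
      deriv_inner_const (1, 0) dl dl (Filter.eventuallyEq_of_mem npD fun q hq => hll q hq)
    linarith [real_inner_comm (l p) (pu l p)]
  have hlvl : ⟪pv l p, l p⟫ = 0 := by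
    have h : ⟪l p, pv l p⟫ + ⟪pv l p, l p⟫ = 0 :=
      deriv_inner_const (0, 1) dl dl (Filter.eventuallyEq_of_mem npD fun q hq => hll q hq)
    linarith [real_inner_comm (l p) (pv l p)]
  have hNuN : ⟪pu N p, N p⟫ = 0 := by
    have h : ⟪N p, pu N p⟫ + ⟪pu N p, N p⟫ = 0 :=
      deriv_inner_const (1, 0) dN dN (Filter.eventuallyEq_of_mem npD fun q hq => hNN q hq)
    linarith [real_inner_comm (N p) (pu N p)]
  have hNvN : ⟪pv N p, N p⟫ = 0 := by
    have h : ⟪N p, pv N p⟫ + ⟪pv N p, N p⟫ = 0 :=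
      deriv_inner_const (0, 1) dN dN (Filter.eventuallyEq_of_mem npD fun q hq => hNN q hq)
    linarith [real_inner_comm (N p) (pv N p)]
  have hNul : ⟪pu N p, l p⟫ = 0 := by
    have h : ⟪N p, pu l p⟫ + ⟪pu N p, l p⟫ = 0 :=
      deriv_inner_const (1, 0) dN dl (Filter.eventuallyEq_of_mem npD fun q hq => hNl q hq)
    linarith [hNlu p hp]
  have hNvl : ⟪pv N p, l p⟫ = 0 := by
    have h : ⟪N p, pv l p⟫ + ⟪pv N p, l p⟫ = 0 :=
      deriv_inner_const (0, 1) dN dl (Filter.eventuallyEq_of_mem npD fun q hq => hNl q hq)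
    linarith [hNlv p hp]
  have hNulu : ⟪pu N p, pu l p⟫ = -ep := by
    have h : ⟪N p, pu (pu l) p⟫ + ⟪pu N p, pu l p⟫ = 0 :=
      deriv_inner_const (1, 0) dN dlu (Filter.eventuallyEq_of_mem npD fun q hq => hNlu q hq)
    have h2 : ⟪N p, pu (pu l) p⟫ = ep := by
      rw [real_inner_comm]
    linarith
  have hNvlu : ⟪pv N p, pu l p⟫ = 0 := by
    have h : ⟪N p, pv (pu l) p⟫ + ⟪pv N p, pu l p⟫ = 0 :=
      deriv_inner_const (0, 1) dN dlu (Filter.eventuallyEq_of_mem npD fun q hq => hNlu q hq)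
    have h2 : ⟪N p, pv (pu l) p⟫ = 0 := by
      rw [real_inner_comm]; exact hf0 p hp
    linarith
  have hNulv : ⟪pu N p, pv l p⟫ = 0 := by
    have h : ⟪N p, pu (pv l) p⟫ + ⟪pu N p, pv l p⟫ = 0 :=
      deriv_inner_const (1, 0) dN dlv (Filter.eventuallyEq_of_mem npD fun q hq => hNlv q hq)
    have h2 : ⟪N p, pu (pv l) p⟫ = 0 := by
      rw [hswapD p hp, real_inner_comm]; exact hf0 p hp
    linarith
  have hNvlv : ⟪pv N p, pv l p⟫ = -gp := by
    have h : ⟪N p, pv (pv l) p⟫ + ⟪pv N p, pv l p⟫ = 0 :=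
      deriv_inner_const (0, 1) dN dlv (Filter.eventuallyEq_of_mem npD fun q hq => hNlv q hq)
    have h2 : ⟪N p, pv (pv l) p⟫ = gp := by
      rw [real_inner_comm]
    linarith
  have hluulv : ⟪pu (pu l) p, pv l p⟫ = -s := by
    have h : ⟪pu l p, pu (pv l) p⟫ + ⟪pu (pu l) p, pv l p⟫ = 0 :=
      deriv_inner_const (1, 0) dlu dlv (Filter.eventuallyEq_of_mem npD fun q hq => hF0 q hq)
    have h2 : ⟪pu l p, pu (pv l) p⟫ = s := by
      rw [hswapD p hp, real_inner_comm]
    linarith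
  have hlulvv : ⟪pu l p, pv (pv l) p⟫ = -t := by
    have h : ⟪pu l p, pv (pv l) p⟫ + ⟪pv (pu l) p, pv l p⟫ = 0 :=
      deriv_inner_const (0, 1) dlu dlv (Filter.eventuallyEq_of_mem npD fun q hq => hF0 q hq)
    linarith [ht]
  have hcodz1 : ⟪pv (pu l) p, pu N p⟫ + ⟪pu (pv (pu l)) p, N p⟫ = 0 :=
    deriv_inner_const (1, 0) dluv dN (Filter.eventuallyEq_of_mem npD fun q hq => hf0 q hq)
  have hcodz2 : ⟪pv (pu l) p, pv N p⟫ + ⟪pv (pv (pu l)) p, N p⟫ = 0 :=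
    deriv_inner_const (0, 1) dluv dN (Filter.eventuallyEq_of_mem npD fun q hq => hf0 q hq)
  -- commuted versions
  have c1 : ⟪pu l p, pu N p⟫ = -ep := by rw [real_inner_comm]; exact hNulu
  have c2 : ⟪pv l p, pu N p⟫ = 0 := by rw [real_inner_comm]; exact hNulv
  have c3 : ⟪N p, pu N p⟫ = 0 := by rw [real_inner_comm]; exact hNuN
  have c4 : ⟪l p, pu N p⟫ = 0 := by rw [real_inner_comm]; exact hNul
  have c5 : ⟪pu l p, pv N p⟫ = 0 := by rw [real_inner_comm]; exact hNvlu
  have c6 : ⟪pv l p, pv N p⟫ = -gp := by rw [real_inner_comm]; exact hNvlv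
  have c7 : ⟪N p, pv N p⟫ = 0 := by rw [real_inner_comm]; exact hNvN
  have c8 : ⟪l p, pv N p⟫ = 0 := by rw [real_inner_comm]; exact hNvl
  have c9 : ⟪pv l p, pu l p⟫ = 0 := by rw [real_inner_comm]; exact hF
  have c10 : ⟪l p, pu l p⟫ = 0 := by rw [real_inner_comm]; exact hlul
  have c11 : ⟪l p, pv l p⟫ = 0 := by rw [real_inner_comm]; exact hlvl
  -- the tangential expansion of the normal derivatives
  have hNu : pu N p = -((ep / Ep) • pu l p) := by
    apply eq_neg_of_add_eq_zero_left
    apply frame_eq_zero hEpos hGpos (hNN p hp) (hll p hp) hF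
      (by rw [real_inner_comm]; exact hNlu p hp) hlul
      (by rw [real_inner_comm]; exact hNlv p hp) hlvl (hNl p hp)
    · rw [inner_add_right, real_inner_smul_right, c1, ← hEp]
      field_simp
      ring
    · rw [inner_add_right, real_inner_smul_right, c2, c9]
      ring
    · rw [inner_add_right, real_inner_smul_right, c3, hNlu p hp]
      ring
    · rw [inner_add_right, real_inner_smul_right, c4, c10]
      ring
  have hNv : pv N p = -((gp / Gp) • pv l p) := by
    apply eq_neg_of_add_eq_zero_left
    apply frame_eq_zero hEpos hGpos (hNN p hp) (hll p hp) hF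
      (by rw [real_inner_comm]; exact hNlu p hp) hlul
      (by rw [real_inner_comm]; exact hNlv p hp) hlvl (hNl p hp)
    · rw [inner_add_right, real_inner_smul_right, c5, hF]
      ring
    · rw [inner_add_right, real_inner_smul_right, c6, ← hGp]
      field_simp
      ring
    · rw [inner_add_right, real_inner_smul_right, c7, hNlv p hp]
      ring
    · rw [inner_add_right, real_inner_smul_right, c8, c11]
      ring
  -- the minimality relation
  have hm' : ep / Ep + gp / Gp = 0 := by
    have hm := hmin p hp
    simpa only [nu1, nu2, iie, iig, iE, iG, ← hep, ← hgp, ← hEp, ← hGp] using hm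
  -- Codazzi: `e_v = 0`
  have hEv0 : pv (iie l N) p = 0 := by
    have hev : pv (iie l N) p = ⟪pu (pu l) p, pv N p⟫ + ⟪pv (pu (pu l)) p, N p⟫ :=
      fderiv_inner_apply (𝕜 := ℝ) dluu dN (0, 1)
    have hsw2 : pu (pv (pu l)) p = pv (pu (pu l)) p := pupv_swap hD hlu hp
    rw [hev, ← hsw2]
    have e2 : ⟪pv (pu l) p, pu N p⟫ = -((ep / Ep) * s) := by
      rw [hNu, inner_neg_right, real_inner_smul_right, ← hs]
    have e1 : ⟪pu (pv (pu l)) p, N p⟫ = (ep / Ep) * s := by linarith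
    have e3 : ⟪pu (pu l) p, pv N p⟫ = (gp / Gp) * s := by
      rw [hNv, inner_neg_right, real_inner_smul_right, hluulv]; ring
    rw [e1, e3]
    linear_combination s * hm'
  -- Codazzi: `g_u = 0`
  have hGu0 : pu (iig l N) p = 0 := by
    have hgu : pu (iig l N) p = ⟪pv (pv l) p, pu N p⟫ + ⟪pu (pv (pv l)) p, N p⟫ :=
      fderiv_inner_apply (𝕜 := ℝ) dlvv dN (1, 0)
    have hsw3 : pu (pv (pv l)) p = pv (pu (pv l)) p := pupv_swap hD hlv hp
    have hsw4 : pv (pu (pv l)) p = pv (pv (pu l)) p := by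
      show fderiv ℝ (pu (pv l)) p (0, 1) = fderiv ℝ (pv (pu l)) p (0, 1)
      rw [(Filter.eventuallyEq_of_mem npD hswapD).fderiv_eq]
    rw [hgu, hsw3, hsw4]
    have e2 : ⟪pv (pu l) p, pv N p⟫ = -((gp / Gp) * t) := by
      rw [hNv, inner_neg_right, real_inner_smul_right, ← ht]
    have e4 : ⟪pv (pv (pu l)) p, N p⟫ = (gp / Gp) * t := by linarith
    have c12 : ⟪pv (pv l) p, pu l p⟫ = -t := by rw [real_inner_comm]; exact hlulvv
    have e5 : ⟪pv (pv l) p, pu N p⟫ = (ep / Ep) * t := by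
      rw [hNu, inner_neg_right, real_inner_smul_right, c12]
      ring
    rw [e4, e5]
    linear_combination t * hm'
  refine ⟨?_, ?_⟩
  · have hev1 : (fun q => nu1 l N q * iE l q) =ᶠ[nhds p] iie l N :=
      Filter.eventuallyEq_of_mem npD fun q hq => by
        have hEq : iE l q ≠ 0 := ne_of_gt (himm q hq).1
        simp only [nu1]
        exact div_mul_cancel₀ _ hEq
    show fderiv ℝ (fun q => nu1 l N q * iE l q) p (0, 1) = 0
    rw [hev1.fderiv_eq]
    exact hEv0
  · have hev2 : (fun q => nu1 l N q * iG l q) =ᶠ[nhds p] fun q => -(iig l N q) :=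
      Filter.eventuallyEq_of_mem npD fun q hq => by
        have hGq : iG l q ≠ 0 := ne_of_gt (himm q hq).2
        have hmq := hmin q hq
        have h1 : nu1 l N q = -(nu2 l N q) := by linarith
        rw [h1]
        simp only [nu2]
        field_simp
    show fderiv ℝ (fun q => nu1 l N q * iG l q) p (1, 0) = 0
    rw [hev2.fderiv_eq, fderiv_fun_neg]
    simp only [ContinuousLinearMap.neg_apply, neg_eq_zero]
    exact hGu0
end
end

section
/- Let n ≥ 3, r > 0, and embed ℝ³ in ℝ^{n+1} as the span of the first three standard basis vectors. Let z : D → ℝ^{n+1} be a smooth immersion with image in the sphere of radius r in ℝ³ (|z| = r and z valued in ℝ³), and set N̄ = z/r. Let e be a constant unit vector orthogonal to ℝ³, let {e, e₂, …, e_{n−2}} be a constant orthonormal basis of the orthogonal complement of ℝ³ in ℝ^{n+1}, fix a constant α with cos α ≠ 0, and define N(u,v) = cos α·N̄(u,v) + sin α·e and e₁(u,v) = −sin α·N̄(u,v) + cos α·e. Define the hypersurface parametrization 𝒳(u,v,w¹,…,w^{n−2}) = z(u,v) + w¹e₁(u,v) + Σ_{α=2}^{n−2} wᵅeᵅ. Then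 at every parameter point where 1 − (w¹ sin α)/r ≠ 0: (i) N(u,v) is a unit vector orthogonal to all first-order partial derivatives of 𝒳 (so N is a unit normal field to the hypersurface); (ii) ∂N/∂wᵅ = 0 for all α; (iii) ∂N/∂u = μ·∂𝒳/∂u and ∂N/∂v = μ·∂𝒳/∂v with the nowhere-zero function μ = (cos α/r)/(1 − (w¹ sin α)/r). Consequently the differential of the Gauss map N has rank exactly two at each such point and both of its nonzero principal curvatures are equal, i.e. the hypersurface is a bi-umbilical hypersurface of type number two. -/
open Real Set
open scoped RealInnerProductSpace

noncomputable section

set_option maxHeartbeats 2000000 in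
/-- **Every two-dimensional sphere generates a family of bi-umbilical hypersurfaces of type
number two**, parameterized by the constant angle `α`: with `N̄ = z/r`,
`N = cos α·N̄ + sin α·e`, `e₁ = -sin α·N̄ + cos α·e` and
`𝒳(u,v,w) = z(u,v) + w¹·e₁(u,v) + ∑_{α≥2} wᵅ·eᵅ`, at every point where
`1 - w¹ sin α / r ≠ 0` the field `N` is a unit normal of the hypersurface, `N` does not
depend on the `w`-variables, `dN = μ·d𝒳` on the `(u,v)`-directions with the nowhere-zero
function `μ = (cos α / r)/(1 - w¹ sin α / r)`, and the Gauss map `N` has rank exactly two. -/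
theorem sphere_generates_biumbilical_hypersurfaces
    (n : ℕ) (hn : 3 ≤ n) (r : ℝ) (hr : 0 < r)
    (D : Set (ℝ × ℝ)) (hD : IsOpen D)
    (z : ℝ × ℝ → EuclideanSpace ℝ (Fin (n + 1)))
    (hz : ContDiffOn ℝ (⊤ : ℕ∞) z D)
    -- `z` is an immersion
    (himm : ∀ p ∈ D, LinearIndependent ℝ ![pu z p, pv z p])
    -- with image in the sphere of radius `r` of `ℝ³ = span{ε₀, ε₁, ε₂} ⊆ ℝ^{n+1}`
    (hsph : ∀ p ∈ D, ‖z p‖ = r)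
    (hzR3 : ∀ p ∈ D, ∀ j : Fin (n + 1), 3 ≤ (j : ℕ) → z p j = 0)
    -- `e` is a constant unit vector orthogonal to `ℝ³`
    (e : EuclideanSpace ℝ (Fin (n + 1))) (he : ‖e‖ = 1)
    (heR3 : ∀ j : Fin (n + 1), (j : ℕ) < 3 → e j = 0)
    -- `{e, e₂, …, e_{n-2}}` is a constant orthonormal basis of the orthogonal complement
    -- of `ℝ³` in `ℝ^{n+1}` (here `b i = e_{i+2}`)
    (b : Fin (n - 3) → EuclideanSpace ℝ (Fin (n + 1)))
    (hb : Orthonormal ℝ b)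
    (hbe : ∀ i, ⟪e, b i⟫ = 0)
    (hbR3 : ∀ i, ∀ j : Fin (n + 1), (j : ℕ) < 3 → b i j = 0)
    (α : ℝ) (hα : Real.cos α ≠ 0) :
    ∀ p ∈ D, ∀ w1 : ℝ, ∀ w : Fin (n - 3) → ℝ,
      1 - w1 * Real.sin α / r ≠ 0 →
      (let XX : (ℝ × ℝ) × ℝ × (Fin (n - 3) → ℝ) → EuclideanSpace ℝ (Fin (n + 1)) :=
         fun q => z q.1
           + q.2.1 • ((-Real.sin α) • (r⁻¹ • z q.1) + Real.cos α • e)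
           + ∑ i, q.2.2 i • b i
       let NN : (ℝ × ℝ) × ℝ × (Fin (n - 3) → ℝ) → EuclideanSpace ℝ (Fin (n + 1)) :=
         fun q => Real.cos α • (r⁻¹ • z q.1) + Real.sin α • e
       let q : (ℝ × ℝ) × ℝ × (Fin (n - 3) → ℝ) := (p, w1, w)
       let μ : ℝ := (Real.cos α / r) / (1 - w1 * Real.sin α / r)
       -- (i): `N` is a unit normal field of the hypersurface `𝒳`
       ‖NN q‖ = 1 ∧
       (∀ dir, ⟪NN q, fderiv ℝ XX q dir⟫ = 0) ∧
       -- (ii): `N` does not depend on the `w`-variables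
       fderiv ℝ NN q ((0, 0), 1, 0) = 0 ∧
       (∀ i, fderiv ℝ NN q ((0, 0), 0, Pi.single i 1) = 0) ∧
       -- (iii): `∂N/∂u = μ·∂𝒳/∂u` and `∂N/∂v = μ·∂𝒳/∂v` with `μ` nowhere zero
       μ ≠ 0 ∧
       fderiv ℝ NN q ((1, 0), 0, 0) = μ • fderiv ℝ XX q ((1, 0), 0, 0) ∧
       fderiv ℝ NN q ((0, 1), 0, 0) = μ • fderiv ℝ XX q ((0, 1), 0, 0) ∧
       -- consequently the Gauss map `N` has rank exactly two
       Module.finrank ℝ (LinearMap.range (fderiv ℝ NN q).toLinearMap) = 2) := by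
  intro p hp w1 w hw
  have hrne : r ≠ 0 := ne_of_gt hr
  have hmem : D ∈ nhds p := hD.mem_nhds hp
  have hzd : DifferentiableAt ℝ z p := (hz.contDiffAt hmem).differentiableAt (by simp)
  set L := fderiv ℝ z p with hLdef
  -- ⟪z p, L v⟫ = 0
  have hLz : ∀ v, ⟪z p, L v⟫ = 0 := by
    intro v
    have hE : (fun q => (⟪z q, z q⟫ : ℝ)) =ᶠ[nhds p] fun _ => r ^ 2 := by
      filter_upwards [hmem] with q hq
      rw [real_inner_self_eq_norm_sq, hsph q hq]
    have h0 : fderiv ℝ (fun q => (⟪z q, z q⟫ : ℝ)) p = 0 := by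
      rw [hE.fderiv_eq]; exact fderiv_const_apply _
    have h1 := fderiv_inner_apply ℝ hzd hzd v
    rw [h0] at h1
    simp only [ContinuousLinearMap.zero_apply] at h1
    have h2 := real_inner_comm (z p) (L v)
    rw [← hLdef] at h1
    linarith [h1.symm, h2]
  -- L v has vanishing coordinates ≥ 3
  have hLcoord : ∀ v, ∀ j : Fin (n + 1), 3 ≤ (j : ℕ) → L v j = 0 := by
    intro v j hj
    have hE : (fun q => EuclideanSpace.proj (𝕜 := ℝ) j (z q)) =ᶠ[nhds p] fun _ => (0 : ℝ) := by
      filter_upwards [hmem] with q hq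
      simpa using hzR3 q hq j hj
    have h0 : fderiv ℝ (fun q => EuclideanSpace.proj (𝕜 := ℝ) j (z q)) p
        = (EuclideanSpace.proj (𝕜 := ℝ) j).comp L :=
      ((EuclideanSpace.proj (𝕜 := ℝ) j).hasFDerivAt.comp p hzd.hasFDerivAt).fderiv
    have h1 : ((EuclideanSpace.proj (𝕜 := ℝ) j).comp L) v = 0 := by
      rw [← h0, hE.fderiv_eq, fderiv_const_apply]
      rfl
    simpa using h1
  -- inner products vanish componentwise
  have hsum0 : ∀ x y : EuclideanSpace ℝ (Fin (n + 1)),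
      (∀ j : Fin (n + 1), x j = 0 ∨ y j = 0) → ⟪x, y⟫ = 0 := by
    intro x y h
    rw [PiLp.inner_apply]
    refine Finset.sum_eq_zero fun j _ => ?_
    rcases h j with h | h <;> simp [h]
  have heL : ∀ v, ⟪e, L v⟫ = 0 := by
    intro v
    refine hsum0 _ _ fun j => ?_
    rcases lt_or_ge (j : ℕ) 3 with h | h
    · exact Or.inl (heR3 j h)
    · exact Or.inr (hLcoord v j h)
  have hbL : ∀ i v, ⟪b i, L v⟫ = 0 := by
    intro i v
    refine hsum0 _ _ fun j => ?_
    rcases lt_or_ge (j : ℕ) 3 with h | h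
    · exact Or.inl (hbR3 i j h)
    · exact Or.inr (hLcoord v j h)
  have hze : ⟪z p, e⟫ = 0 := by
    refine hsum0 _ _ fun j => ?_
    rcases lt_or_ge (j : ℕ) 3 with h | h
    · exact Or.inr (heR3 j h)
    · exact Or.inl (hzR3 p hp j h)
  have hez : ⟪e, z p⟫ = 0 := by rw [real_inner_comm]; exact hze
  have hzb : ∀ i, ⟪z p, b i⟫ = 0 := by
    intro i
    refine hsum0 _ _ fun j => ?_
    rcases lt_or_ge (j : ℕ) 3 with h | h
    · exact Or.inr (hbR3 i j h)
    · exact Or.inl (hzR3 p hp j h)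
  have hzz : ⟪z p, z p⟫ = r ^ 2 := by rw [real_inner_self_eq_norm_sq, hsph p hp]
  have hee : ⟪e, e⟫ = 1 := by rw [real_inner_self_eq_norm_sq, he]; norm_num
  -- setup for fderiv computations
  set Q := (ℝ × ℝ) × ℝ × (Fin (n - 3) → ℝ) with hQdef
  set qpt : Q := (p, w1, w) with hqpt
  set fstL : Q →L[ℝ] ℝ × ℝ := ContinuousLinearMap.fst ℝ (ℝ × ℝ) (ℝ × (Fin (n - 3) → ℝ))
    with hfstL
  set w1L : Q →L[ℝ] ℝ := (ContinuousLinearMap.fst ℝ ℝ (Fin (n - 3) → ℝ)).comp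
      (ContinuousLinearMap.snd ℝ (ℝ × ℝ) (ℝ × (Fin (n - 3) → ℝ))) with hw1L
  set wL : Fin (n - 3) → (Q →L[ℝ] ℝ) := fun i => (ContinuousLinearMap.proj i).comp
      ((ContinuousLinearMap.snd ℝ ℝ (Fin (n - 3) → ℝ)).comp
        (ContinuousLinearMap.snd ℝ (ℝ × ℝ) (ℝ × (Fin (n - 3) → ℝ)))) with hwL
  have hfst : HasFDerivAt (fun q : Q => z q.1) (L.comp fstL) qpt :=
    hzd.hasFDerivAt.comp qpt hasFDerivAt_fst
  have hw1d : HasFDerivAt (fun q : Q => q.2.1) w1L qpt :=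
    hasFDerivAt_fst.comp qpt hasFDerivAt_snd
  have hwd : ∀ i, HasFDerivAt (fun q : Q => q.2.2 i) (wL i) qpt := fun i =>
    by have h := (hasFDerivAt_apply (𝕜 := ℝ) i w).comp qpt ((hasFDerivAt_snd (𝕜 := ℝ)).comp qpt (hasFDerivAt_snd (𝕜 := ℝ))); exact h
  set V : EuclideanSpace ℝ (Fin (n + 1)) := (-Real.sin α) • (r⁻¹ • z p) + Real.cos α • e
    with hV
  set NN' : Q →L[ℝ] EuclideanSpace ℝ (Fin (n + 1)) :=
    Real.cos α • (r⁻¹ • (L.comp fstL)) with hNN'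
  set XX' : Q →L[ℝ] EuclideanSpace ℝ (Fin (n + 1)) :=
    (L.comp fstL + (w1 • ((-Real.sin α) • (r⁻¹ • (L.comp fstL))) + w1L.smulRight V))
      + ∑ i, (wL i).smulRight (b i) with hXX'
  have hNNd : HasFDerivAt
      (fun q : Q => Real.cos α • (r⁻¹ • z q.1) + Real.sin α • e) NN' qpt :=
    ((hfst.const_smul r⁻¹).const_smul (Real.cos α)).add_const (Real.sin α • e)
  have hXXd : HasFDerivAt
      (fun q : Q => z q.1
        + q.2.1 • ((-Real.sin α) • (r⁻¹ • z q.1) + Real.cos α • e)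
        + ∑ i, q.2.2 i • b i) XX' qpt := by
    exact (hfst.add (hw1d.smul
        (((hfst.const_smul r⁻¹).const_smul (-Real.sin α)).add_const (Real.cos α • e)))).add
      (HasFDerivAt.fun_sum fun i _ => (hwd i).smul_const (b i))
  have hNNval : ∀ dir : Q,
      fderiv ℝ (fun q : Q => Real.cos α • (r⁻¹ • z q.1) + Real.sin α • e) qpt dir
        = Real.cos α • (r⁻¹ • L dir.1) := by
    intro dir
    rw [hNNd.fderiv]
    simp only [hNN', ContinuousLinearMap.coe_smul', Pi.smul_apply,
      ContinuousLinearMap.coe_comp', Function.comp_apply]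
    rfl
  have hXXval : ∀ dir : Q,
      fderiv ℝ (fun q : Q => z q.1
        + q.2.1 • ((-Real.sin α) • (r⁻¹ • z q.1) + Real.cos α • e)
        + ∑ i, q.2.2 i • b i) qpt dir
        = L dir.1 + (w1 • ((-Real.sin α) • (r⁻¹ • L dir.1)) + dir.2.1 • V)
          + ∑ i, dir.2.2 i • b i := by
    intro dir
    rw [hXXd.fderiv]
    simp only [hXX', ContinuousLinearMap.add_apply, ContinuousLinearMap.coe_smul',
      Pi.smul_apply, ContinuousLinearMap.coe_comp', Function.comp_apply,
      ContinuousLinearMap.smulRight_apply, ContinuousLinearMap.coe_sum', Finset.sum_apply]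
    rfl
  -- inner product lemmas with the normal
  have hNL : ∀ v, ⟪Real.cos α • (r⁻¹ • z p) + Real.sin α • e, L v⟫ = 0 := by
    intro v
    simp only [inner_add_left, real_inner_smul_left, hLz, heL, mul_zero, add_zero]
  have hNV : ⟪Real.cos α • (r⁻¹ • z p) + Real.sin α • e, V⟫ = 0 := by
    simp only [hV, inner_add_left, inner_add_right, real_inner_smul_left,
      real_inner_smul_right, hzz, hze, hez, hee, mul_zero, add_zero, zero_add, mul_one]
    field_simp
    ring
  have hNb : ∀ i, ⟪Real.cos α • (r⁻¹ • z p) + Real.sin α • e, b i⟫ = 0 := by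
    intro i
    simp only [inner_add_left, real_inner_smul_left, hzb, hbe, mul_zero, add_zero]
  -- the eight claims
  have c1 : ‖Real.cos α • (r⁻¹ • z p) + Real.sin α • e‖ = 1 := by
    have h2 : ⟪Real.cos α • (r⁻¹ • z p) + Real.sin α • e,
        Real.cos α • (r⁻¹ • z p) + Real.sin α • e⟫ = 1 := by
      simp only [inner_add_left, inner_add_right, real_inner_smul_left,
        real_inner_smul_right, hzz, hze, hez, hee, mul_zero, add_zero, zero_add, mul_one]
      field_simp
      linear_combination (sin_sq_add_cos_sq α)
    rw [norm_eq_sqrt_real_inner, h2, Real.sqrt_one]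
  have c2 : ∀ dir : Q, ⟪Real.cos α • (r⁻¹ • z p) + Real.sin α • e,
      fderiv ℝ (fun q : Q => z q.1
        + q.2.1 • ((-Real.sin α) • (r⁻¹ • z q.1) + Real.cos α • e)
        + ∑ i, q.2.2 i • b i) qpt dir⟫ = 0 := by
    intro dir
    rw [hXXval dir]
    simp only [inner_add_right, real_inner_smul_right, inner_sum, hNL, hNV, hNb,
      mul_zero, add_zero, zero_add, Finset.sum_const_zero, smul_eq_mul]
  have c3 : fderiv ℝ (fun q : Q => Real.cos α • (r⁻¹ • z q.1) + Real.sin α • e) qpt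
      ((0, 0), 1, 0) = 0 := by
    rw [hNNval]; simp; exact Or.inr (Or.inr L.map_zero)
  have c4 : ∀ i, fderiv ℝ (fun q : Q => Real.cos α • (r⁻¹ • z q.1) + Real.sin α • e) qpt
      ((0, 0), 0, Pi.single i 1) = 0 := by
    intro i; rw [hNNval]; simp; exact Or.inr (Or.inr L.map_zero)
  set μv : ℝ := (Real.cos α / r) / (1 - w1 * Real.sin α / r) with hμv
  have c5 : μv ≠ 0 := by
    rw [hμv]
    exact div_ne_zero (div_ne_zero hα hrne) hw
  have hw' : r - w1 * Real.sin α ≠ 0 := by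
    intro h
    apply hw
    field_simp
    linarith
  have c67 : ∀ uv : ℝ × ℝ,
      fderiv ℝ (fun q : Q => Real.cos α • (r⁻¹ • z q.1) + Real.sin α • e) qpt (uv, 0, 0)
        = μv • fderiv ℝ (fun q : Q => z q.1
          + q.2.1 • ((-Real.sin α) • (r⁻¹ • z q.1) + Real.cos α • e)
          + ∑ i, q.2.2 i • b i) qpt (uv, 0, 0) := by
    intro uv
    rw [hNNval, hXXval]
    dsimp only
    simp only [zero_smul, Pi.zero_apply, Finset.sum_const_zero, add_zero]
    match_scalars
    rw [hμv]
    field_simp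
    ring
  -- rank two
  have hpu : pu z p = L (1, 0) := by rw [pu, hLdef]
  have hpv : pv z p = L (0, 1) := by rw [pv, hLdef]
  have c8 : Module.finrank ℝ (LinearMap.range
      (fderiv ℝ (fun q : Q => Real.cos α • (r⁻¹ • z q.1) + Real.sin α • e) qpt).toLinearMap) = 2 := by
    have hrange : LinearMap.range
        (fderiv ℝ (fun q : Q => Real.cos α • (r⁻¹ • z q.1) + Real.sin α • e) qpt).toLinearMap
        = Submodule.span ℝ (Set.range ![pu z p, pv z p]) := by
      apply le_antisymm
      · rintro x ⟨dir, rfl⟩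
        rw [show (fderiv ℝ (fun q : Q => Real.cos α • (r⁻¹ • z q.1) + Real.sin α • e) qpt).toLinearMap dir = Real.cos α • (r⁻¹ • L dir.1) from hNNval dir]
        have hdir : L dir.1 = dir.1.1 • L (1, 0) + dir.1.2 • L (0, 1) := by
          have h : dir.1 = dir.1.1 • ((1:ℝ), (0:ℝ)) + dir.1.2 • ((0:ℝ), (1:ℝ)) := by
            simp [Prod.ext_iff]
          conv_lhs => rw [h]
          rw [map_add, map_smul, map_smul]
        rw [hdir]
        have h1 : L (1, 0) ∈ Submodule.span ℝ (Set.range ![pu z p, pv z p]) := by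
          apply Submodule.subset_span
          exact ⟨0, by simp [hpu]⟩
        have h2 : L (0, 1) ∈ Submodule.span ℝ (Set.range ![pu z p, pv z p]) := by
          apply Submodule.subset_span
          exact ⟨1, by simp [hpv]⟩
        exact Submodule.smul_mem _ _ (Submodule.smul_mem _ _
          (Submodule.add_mem _ (Submodule.smul_mem _ _ h1) (Submodule.smul_mem _ _ h2)))
      · rw [Submodule.span_le]
        rintro x ⟨i, rfl⟩
        have hval : ∀ uv : ℝ × ℝ,
            (fderiv ℝ (fun q : Q => Real.cos α • (r⁻¹ • z q.1) + Real.sin α • e) qpt :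
              Q →L[ℝ] _) (((Real.cos α * r⁻¹)⁻¹ • uv, 0, 0)) = L uv := by
          intro uv
          rw [hNNval]
          rw [show (((Real.cos α * r⁻¹)⁻¹ • uv, (0:ℝ), (0 : Fin (n-3) → ℝ)) : Q).1
            = (Real.cos α * r⁻¹)⁻¹ • uv from rfl]
          rw [map_smul, smul_smul, smul_smul]
          rw [show Real.cos α * r⁻¹ * (Real.cos α * r⁻¹)⁻¹ = 1 by
            rw [mul_inv_cancel₀ (mul_ne_zero hα (inv_ne_zero hrne))]]
          rw [one_smul]
        fin_cases i
        · exact ⟨((Real.cos α * r⁻¹)⁻¹ • ((1:ℝ), (0:ℝ)), 0, 0), by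
            simpa [hpu] using hval (1, 0)⟩
        · exact ⟨((Real.cos α * r⁻¹)⁻¹ • ((0:ℝ), (1:ℝ)), 0, 0), by
            simpa [hpv] using hval (0, 1)⟩
    rw [hrange, finrank_span_eq_card (himm p hp), Fintype.card_fin]
  intro XX NN q μ
  exact ⟨c1, c2, c3, c4, c5, c67 (1, 0), c67 (0, 1), c8⟩
end
end
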